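/- arXiv:2507.16405 — 4 statements merged into one kernel-verified Lean document; each statement's English description precedes it below -/
import Mathlib

section
/- If the initial state (T₀, P₀) satisfies that T₀ covers P₀, then for every list of unlabelled examples, the state (T, P) obtained by running the Label procedure on that list also satisfies that T covers P. In particular, if P₀ is nonempty then the final hypothesis set T is nonempty. -/
/-- `T` covers `P` if every example in `P` is accepted by some hypothesis in `T`. -/
def Covers {α : Type*} (T : Set (Set α)) (P : Set α) : Prop :=
  ∀ p ∈ P, ∃ H ∈ T, p ∈ H

open Classical in
/-- The Label step on state `(T, P)` with unlabelled example `e`: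
let `T' = {H ∈ T | e ∉ H}`; if `T'` covers `P` then the new state is `(T', P)`
(`e` labelled negative); otherwise the new state is `(T, insert e P)`
(`e` labelled positive). -/
noncomputable def LabelStep {α : Type*} (s : Set (Set α) × Set α) (e : α) :
    Set (Set α) × Set α :=
  if Covers {H ∈ s.1 | e ∉ H} s.2 then ({H ∈ s.1 | e ∉ H}, s.2)
  else (s.1, insert e s.2)

/-- The Label procedure: left fold of the Label step over a list of examples. -/
noncomputable def LabelRun {α : Type*} (s : Set (Set α) × Set α) (l : List α) :
    Set (Set α) × Set α :=
  l.foldl LabelStep s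


/-! Coverage is an invariant of the Label step: a negative label keeps the state only when
the filtered hypotheses still cover `P`, and a positive label happens only when some
hypothesis of `T` accepts `e` (otherwise filtering by `e` would remove nothing), so `T`
also covers `insert e P`. Positive sets only grow, so a nonempty `P₀` forces a nonempty
final `T`. -/

theorem Covers.nonempty {α : Type*} {T : Set (Set α)} {P : Set α} (h : Covers T P)
    (hP : P.Nonempty) : T.Nonempty :=
  let ⟨p, hp⟩ := hP
  let ⟨H, hH, _⟩ := h p hp
  ⟨H, hH⟩

theorem Covers.insert_of_not_covers_sep {α : Type*} {T : Set (Set α)} {P : Set α} {e : α}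
    (h : Covers T P) (hsep : ¬Covers {H ∈ T | e ∉ H} P) : Covers T (insert e P) := by
  rintro p (rfl | hp)
  · by_contra! hno
    exact hsep fun q hq =>
      let ⟨H, hH, hqH⟩ := h q hq
      ⟨H, ⟨hH, hno H hH⟩, hqH⟩
  · exact h p hp

theorem Covers.labelStep {α : Type*} {s : Set (Set α) × Set α} (h : Covers s.1 s.2) (e : α) :
    Covers (LabelStep s e).1 (LabelStep s e).2 := by
  unfold LabelStep
  split_ifs with hsep
  · exact hsep
  · exact h.insert_of_not_covers_sep hsep

theorem Covers.labelRun {α : Type*} {s : Set (Set α) × Set α} (h : Covers s.1 s.2)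
    (l : List α) : Covers (LabelRun s l).1 (LabelRun s l).2 := by
  induction l generalizing s with
  | nil => exact h
  | cons e l ih => exact ih (h.labelStep e)

theorem snd_subset_labelStep_snd {α : Type*} (s : Set (Set α) × Set α) (e : α) :
    s.2 ⊆ (LabelStep s e).2 := by
  unfold LabelStep
  split_ifs
  · exact subset_rfl
  · exact Set.subset_insert e s.2

theorem snd_subset_labelRun_snd {α : Type*} (s : Set (Set α) × Set α) (l : List α) :
    s.2 ⊆ (LabelRun s l).2 := by
  induction l generalizing s with
  | nil => exact subset_rfl
  | cons e l ih => exact (snd_subset_labelStep_snd s e).trans (ih _)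

/-- If the initial hypothesis set covers the initial positives, the same holds
after running the Label procedure; in particular the final hypothesis set is
nonempty whenever the initial positive set is nonempty. -/
theorem stmt_2 {α : Type*} (T₀ : Set (Set α)) (P₀ : Set α)
    (hTP : Covers T₀ P₀) (l : List α) :
    Covers (LabelRun (T₀, P₀) l).1 (LabelRun (T₀, P₀) l).2 ∧
      (P₀.Nonempty → (LabelRun (T₀, P₀) l).1.Nonempty) := by
  have hcov : Covers (LabelRun (T₀, P₀) l).1 (LabelRun (T₀, P₀) l).2 := Covers.labelRun hTP l
  exact ⟨hcov, fun hP => hcov.nonempty (hP.mono (snd_subset_labelRun_snd (T₀, P₀) l))⟩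
end

section
/- Processing more unlabelled examples yields a smaller hypothesis set: for every initial state (T₀, P₀) and all lists of unlabelled examples l and m, if (T₁, P₁) is the state obtained by running the Label procedure on l and (T₂, P₂) is the state obtained by running it on the concatenation l ++ m, then T₂ ⊆ T₁ and P₁ ⊆ P₂. -/
section

variable {α : Type*}

lemma labelStep_fst_subset_and_subset_snd (s : Set (Set α) × Set α) (e : α) :
    (LabelStep s e).1 ⊆ s.1 ∧ s.2 ⊆ (LabelStep s e).2 := by
  unfold LabelStep
  split
  · exact ⟨Set.sep_subset _ _, subset_rfl⟩
  · exact ⟨subset_rfl, Set.subset_insert _ _⟩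

lemma labelRun_fst_subset_and_subset_snd (s : Set (Set α) × Set α) (l : List α) :
    (LabelRun s l).1 ⊆ s.1 ∧ s.2 ⊆ (LabelRun s l).2 := by
  induction l generalizing s with
  | nil => exact ⟨subset_rfl, subset_rfl⟩
  | cons e l ih =>
    obtain ⟨hstep₁, hstep₂⟩ := labelStep_fst_subset_and_subset_snd s e
    obtain ⟨hrun₁, hrun₂⟩ := ih (LabelStep s e)
    exact ⟨hrun₁.trans hstep₁, hstep₂.trans hrun₂⟩

lemma labelRun_append (s : Set (Set α) × Set α) (l m : List α) :
    LabelRun s (l ++ m) = LabelRun (LabelRun s l) m :=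
  List.foldl_append

end

/-- Processing more unlabelled examples yields a smaller hypothesis set and a
larger positive set. -/
theorem stmt_4 {α : Type*} (T₀ : Set (Set α)) (P₀ : Set α) (l m : List α) :
    (LabelRun (T₀, P₀) (l ++ m)).1 ⊆ (LabelRun (T₀, P₀) l).1 ∧
      (LabelRun (T₀, P₀) l).2 ⊆ (LabelRun (T₀, P₀) (l ++ m)).2 := by
  rw [labelRun_append]
  exact labelRun_fst_subset_and_subset_snd _ m
end

section
/- The output of the Label procedure is consistent with the labelling it produces: suppose the initial state (T₀, P₀) satisfies that T₀ covers P₀, and run the Label procedure on a list of unlabelled examples, obtaining final state (T, P). Then (i) every example that was labelled negative during the run is rejected by every hypothesis in the final set T (it belongs to no H ∈ T), and (ii) every example in the final positive set P (including those relabelled positive during the run) is accepted by some hypothesis in T. -/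
open Classical in
/-- The set of examples labelled negative during a run of the Label procedure. -/
noncomputable def LabelRunNeg {α : Type*} :
    Set (Set α) × Set α → List α → Set α
  | _, [] => ∅
  | s, e :: l =>
      if Covers {H ∈ s.1 | e ∉ H} s.2 then
        insert e (LabelRunNeg (LabelStep s e) l)
      else LabelRunNeg (LabelStep s e) l

/-! The hypothesis set only shrinks during a run, so an example labelled negative, which was
rejected by every hypothesis that survived its step, stays rejected. Coverage is invariant: if `e`
is labelled positive, the hypotheses not containing `e` fail to cover `P`, so they are not all of
`T`, and some hypothesis accepts `e`. -/

theorem Covers.mono {α : Type*} {T T' : Set (Set α)} {P : Set α} (hT : T ⊆ T')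
    (h : Covers T P) : Covers T' P := fun p hp =>
  let ⟨H, hH, hpH⟩ := h p hp
  ⟨H, hT hH, hpH⟩

theorem Covers.exists_mem_of_not_covers_sep {α : Type*} {T : Set (Set α)} {P : Set α} {e : α}
    (h : Covers T P) (hsep : ¬ Covers {H ∈ T | e ∉ H} P) : ∃ H ∈ T, e ∈ H := by
  by_contra! he
  exact hsep (h.mono fun H hH => ⟨hH, he H hH⟩)

theorem Covers.insert {α : Type*} {T : Set (Set α)} {P : Set α} {e : α}
    (h : Covers T P) (he : ∃ H ∈ T, e ∈ H) : Covers T (insert e P) := by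
  rintro p (rfl | hp)
  exacts [he, h p hp]

theorem labelRun_cons {α : Type*} (s : Set (Set α) × Set α) (e : α) (l : List α) :
    LabelRun s (e :: l) = LabelRun (LabelStep s e) l := rfl

theorem labelStep_fst_subset {α : Type*} (s : Set (Set α) × Set α) (e : α) :
    (LabelStep s e).1 ⊆ s.1 := by
  unfold LabelStep
  split_ifs
  exacts [Set.sep_subset _ _, subset_rfl]

theorem labelRun_fst_subset {α : Type*} (s : Set (Set α) × Set α) (l : List α) :
    (LabelRun s l).1 ⊆ s.1 := by
  induction l generalizing s with
  | nil => exact subset_rfl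
  | cons e l ih => exact (ih _).trans (labelStep_fst_subset s e)

theorem notMem_of_mem_labelRunNeg {α : Type*} (s : Set (Set α) × Set α) (l : List α) :
    ∀ e ∈ LabelRunNeg s l, ∀ H ∈ (LabelRun s l).1, e ∉ H := by
  induction l generalizing s with
  | nil => simp [LabelRunNeg]
  | cons a l ih =>
    intro e he H hH
    rw [labelRun_cons] at hH
    rw [LabelRunNeg] at he
    split_ifs at he with hsep
    · rcases he with rfl | he
      · have hH' := labelRun_fst_subset _ l hH
        rw [LabelStep, if_pos hsep] at hH'
        exact hH'.2
      · exact ih _ e he H hH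
    · exact ih _ e he H hH

/-- The output of the Label procedure is consistent with the labelling it
produces: every example labelled negative during the run is rejected by every
hypothesis in the final hypothesis set, and every example in the final positive
set is accepted by some hypothesis in the final hypothesis set. -/
theorem stmt_5 {α : Type*} (T₀ : Set (Set α)) (P₀ : Set α)
    (hTP : Covers T₀ P₀) (l : List α) :
    (∀ e ∈ LabelRunNeg (T₀, P₀) l, ∀ H ∈ (LabelRun (T₀, P₀) l).1, e ∉ H) ∧
      (∀ p ∈ (LabelRun (T₀, P₀) l).2, ∃ H ∈ (LabelRun (T₀, P₀) l).1, p ∈ H) :=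
  ⟨notMem_of_mem_labelRunNeg _ l, Covers.labelRun (s := (T₀, P₀)) hTP l⟩
end

section
/- (Completeness of the Chomsky-Greibach form for context-free languages.) For every context-free language L over an alphabet Σ, there exists a context-free grammar in Chomsky normal form — i.e., one in which every production rule is either of the form N → N₁N₂ with N, N₁, N₂ nonterminals, or of the form N → a with a a terminal symbol — whose generated language is L \ {ε} (L with the empty string removed). -/
/-!
The nonterminals of the new grammar are the sentential forms of the old one that are sublists of
a right-hand side or of the start symbol; there are finitely many. A form `α` gets the rule
`α → β γ` whenever `α ⇒* β ++ γ`, and `α → a` whenever `α ⇒* a`. Flattening a derivation of the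
new grammar gives one of the old grammar, and no new rule erases, so exactly the nonempty words
of the old language are generated. Conversely, if `α ⇒* w` with `|w| ≥ 2`, follow the derivation
(by induction on its length) until a form `x :: β` derives `w` with both `[x]` and `β`
contributing a nonempty part; then `α → [x] β` is a rule, and we conclude by induction on `|w|`.
-/

namespace ContextFreeRule

variable {T N : Type*} {r : ContextFreeRule T N} {u v w : List (Symbol T N)}

lemma Rewrites.append_split (h : r.Rewrites (u ++ v) w) :
    (∃ u', r.Rewrites u u' ∧ w = u' ++ v) ∨ ∃ v', r.Rewrites v v' ∧ w = u ++ v' := by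
  induction u generalizing w with
  | nil => exact .inr ⟨w, h, rfl⟩
  | cons x u ih =>
    cases h with
    | head => exact .inl ⟨_, .head u, by simp⟩
    | cons _ h =>
      rcases ih h with ⟨u', hu, rfl⟩ | ⟨v', hv, rfl⟩
      · exact .inl ⟨x :: u', hu.cons x, rfl⟩
      · exact .inr ⟨v', hv, rfl⟩

lemma Rewrites.singleton_nonterminal {m : N} (h : r.Rewrites [.nonterminal m] v) :
    r.input = m ∧ v = r.output := by
  cases h with
  | head => simp
  | cons _ h => cases h

lemma not_rewrites_map_terminal {t : List T} : ¬ r.Rewrites (t.map .terminal) v :=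
  fun h => by simpa using h.nonterminal_input_mem

end ContextFreeRule

namespace ContextFreeGrammar

variable {T : Type*} {g : ContextFreeGrammar T}

lemma Derives.mem_or_exists_mem_output {u v : List (Symbol T g.NT)} (h : g.Derives u v)
    {x : Symbol T g.NT} (hx : x ∈ v) : x ∈ u ∨ ∃ r ∈ g.rules, x ∈ r.output := by
  induction h with
  | refl => exact .inl hx
  | tail _ hp ih =>
    obtain ⟨r, hr, hrw⟩ := hp
    obtain ⟨p, q, rfl, rfl⟩ := hrw.exists_parts
    simp only [List.mem_append] at hx
    rcases hx with (hx | hx) | hx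
    · exact ih (by simp [hx])
    · exact .inr ⟨r, hr, hx⟩
    · exact ih (by simp [hx])

lemma Derives.ne_nil (hg : ∀ r ∈ g.rules, r.output ≠ []) {u v : List (Symbol T g.NT)}
    (h : g.Derives u v) (hu : u ≠ []) : v ≠ [] := by
  induction h with
  | refl => exact hu
  | tail _ hp _ =>
    obtain ⟨r, hr, hrw⟩ := hp
    obtain ⟨p, q, -, rfl⟩ := hrw.exists_parts
    simp [hg r hr]

inductive DerivesIn (g : ContextFreeGrammar T) :
    List (Symbol T g.NT) → List (Symbol T g.NT) → ℕ → Prop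
  | refl (u : List (Symbol T g.NT)) : g.DerivesIn u u 0
  | head {u v w : List (Symbol T g.NT)} {n : ℕ} :
      g.Produces u v → g.DerivesIn v w n → g.DerivesIn u w (n + 1)

namespace DerivesIn

variable {u v w : List (Symbol T g.NT)} {n : ℕ}

lemma derives (h : g.DerivesIn u v n) : g.Derives u v := by
  induction h with
  | refl => rfl
  | head hp _ ih => exact hp.trans_derives ih

lemma tail (h : g.DerivesIn u v n) (hp : g.Produces v w) : g.DerivesIn u w (n + 1) := by
  induction h with
  | refl => exact .head hp (.refl _)
  | head hq _ ih => exact .head hq (ih hp)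

lemma eq_of_zero (h : g.DerivesIn u v 0) : u = v := by
  cases h
  rfl

lemma eq_of_map_terminal {t : List T} (h : g.DerivesIn (t.map .terminal) v n) :
    v = t.map .terminal := by
  cases h with
  | refl => rfl
  | head hp _ =>
    obtain ⟨r, -, hr⟩ := hp
    exact absurd hr ContextFreeRule.not_rewrites_map_terminal

lemma singleton_nonterminal {m : g.NT} (h : g.DerivesIn [.nonterminal m] w (n + 1)) :
    ∃ r ∈ g.rules, r.input = m ∧ g.DerivesIn r.output w n := by
  cases h with
  | head hp hd =>
    obtain ⟨r, hr, hrw⟩ := hp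
    obtain ⟨hin, rfl⟩ := hrw.singleton_nonterminal
    exact ⟨r, hr, hin, hd⟩

lemma append_split (h : g.DerivesIn (u ++ v) w n) :
    ∃ w₁ w₂ n₁ n₂, w = w₁ ++ w₂ ∧ n = n₁ + n₂ ∧ g.DerivesIn u w₁ n₁ ∧ g.DerivesIn v w₂ n₂ := by
  generalize hs : u ++ v = s at h
  induction h generalizing u v with
  | refl => exact ⟨u, v, 0, 0, hs.symm, rfl, .refl u, .refl v⟩
  | head hp _ ih =>
    obtain ⟨r, hr, hrw⟩ := hp
    rw [← hs] at hrw
    rcases hrw.append_split with ⟨u', hu, rfl⟩ | ⟨v', hv, rfl⟩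
    · obtain ⟨w₁, w₂, n₁, n₂, rfl, rfl, h₁, h₂⟩ := ih rfl
      exact ⟨w₁, w₂, n₁ + 1, n₂, rfl, by omega, .head ⟨r, hr, hu⟩ h₁, h₂⟩
    · obtain ⟨w₁, w₂, n₁, n₂, rfl, rfl, h₁, h₂⟩ := ih rfl
      exact ⟨w₁, w₂, n₁, n₂ + 1, rfl, by omega, h₁, .head ⟨r, hr, hv⟩ h₂⟩

end DerivesIn

lemma Derives.exists_derivesIn {u v : List (Symbol T g.NT)} (h : g.Derives u v) :
    ∃ n, g.DerivesIn u v n := by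
  induction h with
  | refl => exact ⟨0, .refl _⟩
  | tail _ hp ih =>
    obtain ⟨n, hn⟩ := ih
    exact ⟨n + 1, hn.tail hp⟩

section Expand

variable {T N : Type*}

def expand : List (Symbol T (List (Symbol T N))) → List (Symbol T N) :=
  List.flatMap fun
    | .terminal a => [.terminal a]
    | .nonterminal α => α

@[simp] lemma expand_nil : expand ([] : List (Symbol T (List (Symbol T N)))) = [] := rfl

@[simp] lemma expand_append (u v : List (Symbol T (List (Symbol T N)))) :
    expand (u ++ v) = expand u ++ expand v :=
  List.flatMap_append

@[simp] lemma expand_cons_nonterminal (α : List (Symbol T N))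
    (u : List (Symbol T (List (Symbol T N)))) : expand (.nonterminal α :: u) = α ++ expand u :=
  rfl

@[simp] lemma expand_cons_terminal (a : T) (u : List (Symbol T (List (Symbol T N)))) :
    expand (.terminal a :: u) = .terminal a :: expand u :=
  rfl

@[simp] lemma expand_map_terminal (w : List T) :
    expand (w.map .terminal : List (Symbol T (List (Symbol T N)))) = w.map .terminal := by
  induction w <;> simp_all

end Expand

section ChomskyNormalForm

open scoped List

variable {T : Type} (g : ContextFreeGrammar T)

def subforms : Set (List (Symbol T g.NT)) :=
  ⋃ s ∈ insert [.nonterminal g.initial] (ContextFreeRule.output '' g.rules), {l | l <+ s}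

lemma subforms_finite : g.subforms.Finite :=
  ((g.rules.finite_toSet.image _).insert _).biUnion fun s _ =>
    s.sublists.finite_toSet.subset fun _ => List.mem_sublists.2

variable {g}

lemma initial_mem_subforms : [.nonterminal g.initial] ∈ g.subforms :=
  Set.mem_biUnion (Set.mem_insert _ _) (List.Sublist.refl _)

lemma output_mem_subforms {r : ContextFreeRule T g.NT} (hr : r ∈ g.rules) :
    r.output ∈ g.subforms :=
  Set.mem_biUnion (Set.mem_insert_of_mem _ ⟨r, hr, rfl⟩) (List.Sublist.refl _)

lemma mem_subforms_of_sublist {l l' : List (Symbol T g.NT)} (hl : l ∈ g.subforms)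
    (hl' : l' <+ l) : l' ∈ g.subforms := by
  obtain ⟨s, hs, hls⟩ := Set.mem_iUnion₂.1 hl
  exact Set.mem_biUnion hs (hl'.trans hls)

lemma singleton_mem_subforms_of_derives {α : List (Symbol T g.NT)} (hα : α ∈ g.subforms)
    {x : Symbol T g.NT} (h : g.Derives α [x]) : [x] ∈ g.subforms := by
  rcases h.mem_or_exists_mem_output (List.mem_singleton_self x) with hx | ⟨r, hr, hx⟩
  · exact mem_subforms_of_sublist hα (List.singleton_sublist.2 hx)
  · exact mem_subforms_of_sublist (output_mem_subforms hr) (List.singleton_sublist.2 hx)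

variable (g)

def cnfOutputs : Set (List (Symbol T (List (Symbol T g.NT)))) :=
  {o | (∃ β ∈ g.subforms, ∃ γ ∈ g.subforms, o = [.nonterminal β, .nonterminal γ]) ∨
    ∃ a, [.terminal a] ∈ g.subforms ∧ o = [.terminal a]}

def cnfRules : Set (ContextFreeRule T (List (Symbol T g.NT))) :=
  {r | r.input ∈ g.subforms ∧ r.output ∈ g.cnfOutputs ∧ g.Derives r.input (expand r.output)}

lemma cnfOutputs_finite : g.cnfOutputs.Finite := by
  have hF := g.subforms_finite
  have hterm : {a : T | [.terminal a] ∈ g.subforms}.Finite :=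
    hF.preimage fun a _ b _ h => by simpa using h
  refine (((hF.prod hF).image fun p => [.nonterminal p.1, .nonterminal p.2]).union
    (hterm.image fun a => [.terminal a])).subset ?_
  rintro o (⟨β, hβ, γ, hγ, rfl⟩ | ⟨a, ha, rfl⟩)
  · exact .inl ⟨(β, γ), ⟨hβ, hγ⟩, rfl⟩
  · exact .inr ⟨a, ha, rfl⟩

lemma cnfRules_finite : g.cnfRules.Finite :=
  ((g.subforms_finite.prod g.cnfOutputs_finite).image fun p => ⟨p.1, p.2⟩).subset
    fun r hr => ⟨(r.input, r.output), ⟨hr.1, hr.2.1⟩, rfl⟩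

-- Reducible, so that the `simp` lemmas about `expand` see through `g.toCNF.NT`.
noncomputable abbrev toCNF : ContextFreeGrammar T where
  NT := List (Symbol T g.NT)
  initial := [.nonterminal g.initial]
  rules := g.cnfRules_finite.toFinset

variable {g}

lemma mem_toCNF_rules {r : ContextFreeRule T (List (Symbol T g.NT))} :
    r ∈ g.toCNF.rules ↔ r ∈ g.cnfRules :=
  Set.Finite.mem_toFinset _

lemma toCNF_output {r : ContextFreeRule T g.toCNF.NT} (hr : r ∈ g.toCNF.rules) :
    (∃ β γ : g.toCNF.NT, r.output = [.nonterminal β, .nonterminal γ]) ∨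
      ∃ a : T, r.output = [.terminal a] := by
  rcases (mem_toCNF_rules.1 hr).2.1 with ⟨β, -, γ, -, ho⟩ | ⟨a, -, ho⟩
  · exact .inl ⟨β, γ, ho⟩
  · exact .inr ⟨a, ho⟩

lemma toCNF_output_ne_nil {r : ContextFreeRule T g.toCNF.NT} (hr : r ∈ g.toCNF.rules) :
    r.output ≠ [] := by
  rcases toCNF_output hr with ⟨β, γ, ho⟩ | ⟨a, ho⟩ <;> simp [ho]

lemma derives_expand_of_toCNF {u v : List (Symbol T g.toCNF.NT)} (h : g.toCNF.Derives u v) :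
    g.Derives (expand u) (expand v) := by
  induction h with
  | refl => rfl
  | tail _ hp ih =>
    obtain ⟨r, hr, hrw⟩ := hp
    obtain ⟨p, q, rfl, rfl⟩ := hrw.exists_parts
    have hr' : g.Derives r.input (expand r.output) := (mem_toCNF_rules.1 hr).2.2
    refine ih.trans ?_
    simpa using (hr'.append_right (expand q)).append_left (expand p)

variable (g) in
def BinarySplit (α : List (Symbol T g.NT)) (w : List T) : Prop :=
  ∃ β ∈ g.subforms, ∃ γ ∈ g.subforms, g.Derives α (β ++ γ) ∧
    ∃ w₁ w₂, w = w₁ ++ w₂ ∧ w₁ ≠ [] ∧ w₂ ≠ [] ∧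
      g.Derives β (w₁.map .terminal) ∧ g.Derives γ (w₂.map .terminal)

lemma BinarySplit.of_derives {α α' : List (Symbol T g.NT)} {w : List T} (h : g.Derives α α')
    (hs : g.BinarySplit α' w) : g.BinarySplit α w :=
  let ⟨β, hβ, γ, hγ, hα', rest⟩ := hs
  ⟨β, hβ, γ, hγ, h.trans hα', rest⟩

lemma binarySplit_of_derivesIn {n : ℕ} {α : List (Symbol T g.NT)} (hα : α ∈ g.subforms)
    {w : List T} (h : g.DerivesIn α (w.map .terminal) n) (hw : 2 ≤ w.length) :
    g.BinarySplit α w := by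
  induction n using Nat.strong_induction_on generalizing α w with
  | _ n ih =>
  match α, n, h with
  | [], _, h =>
    have := h.eq_of_map_terminal (t := [])
    simp_all
  | [.terminal a], _, h =>
    have := h.eq_of_map_terminal (t := [a])
    simp_all
  | [.nonterminal m], 0, h =>
    have := congrArg List.length h.eq_of_zero
    simp at this
    omega
  | [.nonterminal m], k + 1, h =>
    obtain ⟨r, hr, rfl, hk⟩ := h.singleton_nonterminal
    exact (ih k k.lt_succ_self (output_mem_subforms hr) hk hw).of_derives
      (Produces.single ⟨r, hr, .input_output⟩)
  | x :: y :: β, n, h =>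
    obtain ⟨u, v, n₁, n₂, huv, rfl, h₁, h₂⟩ := h.append_split (u := [x]) (v := y :: β)
    obtain ⟨w₁, w₂, rfl, rfl, rfl⟩ := List.map_eq_append_iff.1 huv
    have hx : [x] ∈ g.subforms := mem_subforms_of_sublist hα (by simp)
    have hβ : y :: β ∈ g.subforms := mem_subforms_of_sublist hα (List.sublist_cons_self _ _)
    by_cases hw₁ : w₁ = []
    · subst hw₁
      have hn₁ : n₁ ≠ 0 := by
        rintro rfl
        simpa using h₁.eq_of_zero
      exact (ih n₂ (by omega) hβ h₂ (by simpa using hw)).of_derives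
        (by simpa using h₁.derives.append_right (y :: β))
    by_cases hw₂ : w₂ = []
    · subst hw₂
      have hn₂ : n₂ ≠ 0 := by
        rintro rfl
        simpa using h₂.eq_of_zero
      rw [List.append_nil] at hw ⊢
      exact (ih n₁ (by omega) hx h₁ hw).of_derives
        (by simpa using h₂.derives.append_left [x])
    exact ⟨[x], hx, y :: β, hβ, .refl _, w₁, w₂, rfl, hw₁, hw₂, h₁.derives, h₂.derives⟩

lemma toCNF_derives_of_derives {α : List (Symbol T g.NT)} (hα : α ∈ g.subforms) {w : List T}
    (hw : w ≠ []) (h : g.Derives α (w.map .terminal)) :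
    g.toCNF.Derives [.nonterminal α] (w.map .terminal) := by
  match w, hw with
  | [a], _ =>
    have hrule : ⟨α, [.terminal a]⟩ ∈ g.toCNF.rules :=
      mem_toCNF_rules.2
        ⟨hα, .inr ⟨a, singleton_mem_subforms_of_derives hα h, rfl⟩, by simpa using h⟩
    exact Produces.single ⟨_, hrule, .input_output⟩
  | a :: b :: w, _ =>
    obtain ⟨n, hn⟩ := h.exists_derivesIn
    obtain ⟨β, hβ, γ, hγ, hαβγ, w₁, w₂, hw, hw₁, hw₂, hβw, hγw⟩ :=
      binarySplit_of_derivesIn hα hn (by simp)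
    have hrule : ⟨α, [.nonterminal β, .nonterminal γ]⟩ ∈ g.toCNF.rules :=
      mem_toCNF_rules.2 ⟨hα, .inl ⟨β, hβ, γ, hγ, rfl⟩, by simpa using hαβγ⟩
    have hlen : w₁.length < (a :: b :: w).length ∧ w₂.length < (a :: b :: w).length := by
      rw [hw, List.length_append]
      have := List.length_pos_iff.2 hw₁
      have := List.length_pos_iff.2 hw₂
      omega
    rw [hw, List.map_append]
    have hβγ : g.toCNF.Derives ([.nonterminal β] ++ [.nonterminal γ])
        (w₁.map .terminal ++ w₂.map .terminal) :=
      ((toCNF_derives_of_derives hβ hw₁ hβw).append_right _).trans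
        ((toCNF_derives_of_derives hγ hw₂ hγw).append_left _)
    exact (Produces.single ⟨_, hrule, .input_output⟩).trans hβγ
termination_by w.length
decreasing_by exacts [hlen.1, hlen.2]

lemma mem_toCNF_language_iff {w : List T} : w ∈ g.toCNF.language ↔ w ∈ g.language ∧ w ≠ [] := by
  simp only [mem_language_iff]
  refine ⟨fun h => ⟨?_, ?_⟩, fun ⟨h, hw⟩ => toCNF_derives_of_derives initial_mem_subforms hw h⟩
  · simpa using derives_expand_of_toCNF h
  · rintro rfl
    exact h.ne_nil (fun _ => toCNF_output_ne_nil) (List.cons_ne_nil _ _) rfl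

end ChomskyNormalForm

end ContextFreeGrammar

/-- Completeness of Chomsky normal form: every context-free language `L` is
generated, up to removal of the empty string, by a grammar all of whose rules
have the form `N → N₁N₂` or `N → a`. -/
theorem stmt_9 {σ : Type} (L : Language σ) (hL : L.IsContextFree) :
    ∃ g : ContextFreeGrammar σ,
      (∀ r ∈ g.rules,
        (∃ n₁ n₂ : g.NT, r.output = [Symbol.nonterminal n₁, Symbol.nonterminal n₂]) ∨
        (∃ a : σ, r.output = [Symbol.terminal a])) ∧
      ∀ w : List σ, w ∈ g.language ↔ w ∈ L ∧ w ≠ [] := by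
  obtain ⟨g, rfl⟩ := hL
  exact ⟨g.toCNF, fun _ => ContextFreeGrammar.toCNF_output,
    fun _ => ContextFreeGrammar.mem_toCNF_language_iff⟩
end
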